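/- Suppose X₁, ..., X_n are independent random vectors, Π is a uniformly random permutation of {1,...,n} independent of them, and Y = (X_{Π⁻¹(1)}, ..., X_{Π⁻¹(n)}). Suppose S(X_u) is a statistic such that for each u, conditionally on S(X_u) = s, the distribution of X_u does not depend on u (i.e., P(X_u = x | S(X_u) = s) is the same function of (x,s) for all u). Then Π and Y are conditionally independent given (S(X_{Π⁻¹(1)}), ..., S(X_{Π⁻¹(n)})). -/

import Mathlib

/-!
By the hypothesis, `f u x = g x · P(S(X_u) = S x)` for a function `g` that does not depend on `u`.
Writing the joint weight of `(X, Π)` in terms of `(Y, Π)`, it becomes `G(Y) · H(S ∘ Y, Π)`: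
a factor depending on `Y` only, times a factor depending on the statistic of `Y` and on `Π`.
Conditionally on the statistic this weight has product form, so `Y` and `Π` are conditionally
independent.
-/

open Finset
open scoped Classical

-- The mass of an event under the weight `w`; with `w` the law of `(X, Π)` this is the `Pr` of the
-- statement (decidability of events is classical there too).
noncomputable def weightedProb {Ω : Type*} [Fintype Ω] (w : Ω → ℝ) (E : Ω → Prop) : ℝ :=
  ∑ ω, if E ω then w ω else 0

section WeightedProb

variable {Ω Z Θ T : Type*} [Fintype Ω] [Fintype Z] [Fintype Θ]

theorem weightedProb_comp_equiv (e : Ω ≃ Z × Θ) (w : Ω → ℝ) (E : Z × Θ → Prop) :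
    weightedProb w (fun ω => E (e ω)) = weightedProb (fun p => w (e.symm p)) E :=
  Fintype.sum_equiv e _ _ fun ω => by simp

variable (φ : Z → T) (G : Z → ℝ) (H : T → Θ → ℝ)

theorem weightedProb_fst_of_factorization (A : Z → Prop) (t : T) (hA : ∀ z, A z → φ z = t) :
    weightedProb (fun p : Z × Θ => G p.1 * H (φ p.1) p.2) (fun p => A p.1)
      = (∑ z with A z, G z) * ∑ θ, H t θ := by
  rw [weightedProb, Fintype.sum_prod_type, sum_filter, sum_mul]
  refine sum_congr rfl fun z _ => ?_
  split_ifs with hz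
  · simp [mul_sum, hA z hz]
  · simp

theorem weightedProb_snd_eq_and_fst_of_factorization (A : Z → Prop) (t : T)
    (hA : ∀ z, A z → φ z = t) (θ₀ : Θ) :
    weightedProb (fun p : Z × Θ => G p.1 * H (φ p.1) p.2) (fun p => p.2 = θ₀ ∧ A p.1)
      = (∑ z with A z, G z) * H t θ₀ := by
  rw [weightedProb, Fintype.sum_prod_type, sum_filter, sum_mul]
  refine sum_congr rfl fun z _ => ?_
  split_ifs with hz
  · simp [hz, hA z hz]
  · simp [hz]

theorem weightedProb_cross_mul_of_factorization (e : Ω ≃ Z × Θ) (w : Ω → ℝ)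
    (hw : ∀ z θ, w (e.symm (z, θ)) = G z * H (φ z) θ) (z₀ : Z) (θ₀ : Θ) :
    weightedProb w (fun ω => (e ω).2 = θ₀ ∧ (e ω).1 = z₀)
        * weightedProb w (fun ω => φ (e ω).1 = φ z₀)
      = weightedProb w (fun ω => (e ω).2 = θ₀ ∧ φ (e ω).1 = φ z₀)
        * weightedProb w (fun ω => (e ω).1 = z₀) := by
  have hw' : (fun p => w (e.symm p)) = fun p => G p.1 * H (φ p.1) p.2 :=
    funext fun p => hw p.1 p.2
  rw [weightedProb_comp_equiv e w (fun p => p.2 = θ₀ ∧ p.1 = z₀),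
    weightedProb_comp_equiv e w (fun p => φ p.1 = φ z₀),
    weightedProb_comp_equiv e w (fun p => p.2 = θ₀ ∧ φ p.1 = φ z₀),
    weightedProb_comp_equiv e w (fun p => p.1 = z₀), hw']
  rw [weightedProb_snd_eq_and_fst_of_factorization φ G H (· = z₀) (φ z₀) (fun _ => congrArg φ),
    weightedProb_fst_of_factorization φ G H (fun z => φ z = φ z₀) (φ z₀) (fun _ hz => hz),
    weightedProb_snd_eq_and_fst_of_factorization φ G H (fun z => φ z = φ z₀) (φ z₀)
      (fun _ hz => hz),
    weightedProb_fst_of_factorization φ G H (· = z₀) (φ z₀) (fun _ => congrArg φ)]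
  ring

end WeightedProb

-- `(X, Π) ↦ (Y, Π)` with `Y = X ∘ Π⁻¹`.
def permutedSampleEquiv (ι α : Type*) : (ι → α) × Equiv.Perm ι ≃ (ι → α) × Equiv.Perm ι where
  toFun ω := (fun j => ω.1 (ω.2⁻¹ j), ω.2)
  invFun p := (fun u => p.1 (p.2 u), p.2)
  left_inv ω := by simp
  right_inv p := by simp

section Statistic

variable {ι 𝒳 𝒮 : Type*} [Fintype ι] [Fintype 𝒳] [DecidableEq 𝒮]

def statLaw (f : ι → 𝒳 → ℝ) (S : 𝒳 → 𝒮) (u : ι) (s : 𝒮) : ℝ :=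
  ∑ x with S x = s, f u x

theorem exists_eq_mul_statLaw (f : ι → 𝒳 → ℝ) (S : 𝒳 → 𝒮) (hf : ∀ u x, 0 ≤ f u x)
    (hcond : ∀ u v x, f u x * statLaw f S v (S x) = f v x * statLaw f S u (S x)) :
    ∃ g : 𝒳 → ℝ, ∀ u x, f u x = g x * statLaw f S u (S x) := by
  refine ⟨fun x => (∑ v, f v x) / ∑ v, statLaw f S v (S x), fun u x => ?_⟩
  by_cases hD : ∑ v, statLaw f S v (S x) = 0
  -- the junk value `_ / 0 = 0` is harmless: then `f u x` vanishes
  · have hT : statLaw f S u (S x) = 0 :=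
      (sum_eq_zero_iff_of_nonneg fun v _ => sum_nonneg fun x _ => hf v x).mp hD u (mem_univ u)
    have hle : f u x ≤ statLaw f S u (S x) :=
      single_le_sum (fun x' _ => hf u x') (by simp)
    rw [hT, mul_zero]
    exact le_antisymm (hT ▸ hle) (hf u x)
  · rw [div_mul_eq_mul_div, eq_div_iff hD, mul_sum, sum_mul]
    exact sum_congr rfl fun v _ => hcond u v x

end Statistic

theorem sufficiency_of_statistic_general
    (n : ℕ) (𝒳 𝒮 : Type) [Fintype 𝒳] [DecidableEq 𝒮]
    (f : Fin n → 𝒳 → ℝ) (S : 𝒳 → 𝒮)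
    (hfnn : ∀ u x, 0 ≤ f u x)
    (hcond : ∀ u v x,
      f u x * (∑ x' ∈ Finset.univ.filter (fun x' => S x' = S x), f v x')
        = f v x * (∑ x' ∈ Finset.univ.filter (fun x' => S x' = S x), f u x')) :
    ∀ (π : Equiv.Perm (Fin n)) (y : Fin n → 𝒳),
      (fun (Pr : (((Fin n → 𝒳) × Equiv.Perm (Fin n)) → Prop) → ℝ) =>
        Pr (fun ω => ω.2 = π ∧ (fun j => ω.1 (ω.2⁻¹ j)) = y) *
          Pr (fun ω => (fun j => S (ω.1 (ω.2⁻¹ j))) = S ∘ y)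
        = Pr (fun ω => ω.2 = π ∧ (fun j => S (ω.1 (ω.2⁻¹ j))) = S ∘ y) *
          Pr (fun ω => (fun j => ω.1 (ω.2⁻¹ j)) = y))
      (fun E => ∑ ω : (Fin n → 𝒳) × Equiv.Perm (Fin n),
        if E ω then (∏ u, f u (ω.1 u)) / (Nat.factorial n : ℝ) else 0) := by
  intro π y
  obtain ⟨g, hfg⟩ := exists_eq_mul_statLaw f S hfnn hcond
  refine weightedProb_cross_mul_of_factorization (S ∘ ·) (fun z => (∏ j, g (z j)) / n.factorial)
    (fun t σ => ∏ u, statLaw f S u (t (σ u))) (permutedSampleEquiv (Fin n) 𝒳)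
    (fun ω => (∏ u, f u (ω.1 u)) / n.factorial) (fun z σ => ?_) y π
  simp only [permutedSampleEquiv, Equiv.coe_fn_symm_mk, hfg, prod_mul_distrib,
    Function.comp_apply, Equiv.prod_comp σ fun j => g (z j)]
  ring

/-- Sufficiency lemma: let `X₁,...,X_n` be independent with pmfs `f u`, let `Π` be an
independent uniform permutation, and `Y = (X_{Π⁻¹(1)},...,X_{Π⁻¹(n)})`. If, conditionally
on `S(X_u) = s`, the distribution of `X_u` does not depend on `u`, then `Π` and `Y` are
conditionally independent given the permuted statistics `(S(X_{Π⁻¹(1)}),...,S(X_{Π⁻¹(n)}))`,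
expressed by the factorization `P(Π=π, Y=y)·P(Svec = S∘y) = P(Π=π, Svec = S∘y)·P(Y=y)`. -/
theorem sufficiency_of_statistic
    (n : ℕ) (𝒳 𝒮 : Type) [Fintype 𝒳] [DecidableEq 𝒳] [DecidableEq 𝒮]
    (f : Fin n → 𝒳 → ℝ) (S : 𝒳 → 𝒮)
    (hfnn : ∀ u x, 0 ≤ f u x) (hfsum : ∀ u, ∑ x, f u x = 1)
    (hcond : ∀ u v x,
      f u x * (∑ x' ∈ Finset.univ.filter (fun x' => S x' = S x), f v x')
        = f v x * (∑ x' ∈ Finset.univ.filter (fun x' => S x' = S x), f u x')) :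
    ∀ (π : Equiv.Perm (Fin n)) (y : Fin n → 𝒳),
      (fun (Pr : (((Fin n → 𝒳) × Equiv.Perm (Fin n)) → Prop) → ℝ) =>
        Pr (fun ω => ω.2 = π ∧ (fun j => ω.1 (ω.2⁻¹ j)) = y) *
          Pr (fun ω => (fun j => S (ω.1 (ω.2⁻¹ j))) = S ∘ y)
        = Pr (fun ω => ω.2 = π ∧ (fun j => S (ω.1 (ω.2⁻¹ j))) = S ∘ y) *
          Pr (fun ω => (fun j => ω.1 (ω.2⁻¹ j)) = y))
      (fun E => ∑ ω : (Fin n → 𝒳) × Equiv.Perm (Fin n),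
        if E ω then (∏ u, f u (ω.1 u)) / (Nat.factorial n : ℝ) else 0) :=
  sufficiency_of_statistic_general n 𝒳 𝒮 f S hfnn hcond
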